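/- arXiv:2308.01182 — 5 statements merged into one kernel-verified Lean document; each statement's English description precedes it below -/
import Mathlib

section
/- Let G be a finite group and A ≤ Sym(G) a permutation group containing all right multiplications of G. Then the ℤ-span of the elements ⟨X⟩ := Σ_{x∈X} x of the integer group ring ℤG, where X ranges over the orbits of the point stabilizer A_{1} on G, is a subring of ℤG (Schur's theorem on transitivity modules). -/
/-!
An element of `ℤG` lies in the `ℤ`-span of the orbit sums of a group acting on `G` exactly when
its coefficient function is constant on the orbits. For the point stabilizer `A₁` these elements
form a subring: for `σ ∈ A₁` and `y ∈ G`, the permutation `x ↦ σ (x y) (σ y)⁻¹` again lies in `A₁`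
because `A` contains the right multiplications, and this lets `σ` pass through the convolution
formula `(f f') x = ∑ y, f (x y⁻¹) f' y`.
-/

open scoped Pointwise

noncomputable def clsum {G : Type*} [Group G] [Fintype G] (s : Set G) :
    MonoidAlgebra ℤ G :=
  ∑ x ∈ s.toFinite.toFinset, MonoidAlgebra.of ℤ G x

open MulAction

section OrbitSums

variable {H G : Type*} [Group H] [MulAction H G]

variable (H G) in
def invariantCoeffs : Submodule ℤ (MonoidAlgebra ℤ G) where
  carrier := {f | ∀ (h : H) (g : G), f.coeff (h • g) = f.coeff g}
  zero_mem' _ _ := rfl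
  add_mem' hf hf' h g := by
    simp only [MonoidAlgebra.coeff_add, Finsupp.add_apply, hf h g, hf' h g]
  smul_mem' c f hf h g := by simp only [MonoidAlgebra.coeff_smul_apply, hf h g]

variable [Group G] [Fintype G]

lemma coeff_clsum (s : Set G) (t : G) : (clsum s).coeff t = s.indicator 1 t := by
  classical
  simp [clsum, MonoidAlgebra.of_apply, Finsupp.single_apply, Set.indicator_apply]

lemma clsum_orbit_mem_invariantCoeffs (x : G) : clsum (orbit H x) ∈ invariantCoeffs H G := by
  intro h g
  have : h • g ∈ orbit H x ↔ g ∈ orbit H x := by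
    rw [← orbit_eq_iff, orbit_smul, orbit_eq_iff]
  classical
  simp only [coeff_clsum, Set.indicator_apply, this, Pi.one_apply]

lemma mem_span_clsum_orbit {f : MonoidAlgebra ℤ G} (hf : f ∈ invariantCoeffs H G) :
    f ∈ Submodule.span ℤ (Set.range fun x : G => clsum (orbit H x)) := by
  classical
  let c : orbitRel.Quotient H G → ℤ := Quotient.lift f.coeff fun _ y ⟨h, hxy⟩ => hxy ▸ hf h y
  have hf_eq : f = ∑ q, c q • clsum q.orbit := by
    ext x
    simp only [MonoidAlgebra.coeff_sum, Finset.sum_apply', MonoidAlgebra.coeff_smul_apply,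
      coeff_clsum, Set.indicator_apply, orbitRel.Quotient.mem_orbit, Pi.one_apply, smul_eq_mul,
      mul_ite, mul_one, mul_zero, Finset.sum_ite_eq, Finset.mem_univ, if_true]
    rfl
  rw [hf_eq]
  refine Submodule.sum_mem _ fun q _ => Submodule.smul_mem _ _ (Submodule.subset_span ⟨q.out, ?_⟩)
  rw [q.orbit_eq_orbit_out Quotient.out_eq']

theorem span_clsum_orbit :
    Submodule.span ℤ (Set.range fun x : G => clsum (orbit H x)) = invariantCoeffs H G := by
  refine le_antisymm (Submodule.span_le.2 ?_) fun f => mem_span_clsum_orbit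
  rintro _ ⟨x, rfl⟩
  exact clsum_orbit_mem_invariantCoeffs x

end OrbitSums

section SchurRing

variable {G : Type*} [Group G]

lemma one_mem_invariantCoeffs {H : Type*} [Group H] [MulAction H G]
    (h_one : ∀ h : H, h • (1 : G) = 1) : 1 ∈ invariantCoeffs H G := by
  classical
  intro h g
  have : h • g = 1 ↔ g = 1 := by rw [smul_eq_iff_eq_inv_smul, h_one]
  simp only [MonoidAlgebra.one_def, MonoidAlgebra.coeff_single, Finsupp.single_apply, eq_comm,
    this]

variable {A : Subgroup (Equiv.Perm G)}

lemma exists_stabilizer_smul_mul_inv (hA : ∀ g : G, Equiv.mulRight g ∈ A)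
    (s : stabilizer A (1 : G)) (y : G) :
    ∃ t : stabilizer A (1 : G), ∀ g, t • (g * y⁻¹) = s • g * (s • y)⁻¹ := by
  refine ⟨⟨⟨Equiv.mulRight (s • y)⁻¹ * s * Equiv.mulRight y,
    A.mul_mem (A.mul_mem (hA _) s.1.2) (hA y)⟩, ?_⟩, fun g => ?_⟩
  · have hs : s • (1 : G) = 1 := s.2
    simp [mem_stabilizer_iff, Subgroup.smul_def, Equiv.Perm.smul_def] at hs ⊢
  · simp [Subgroup.smul_def, Equiv.Perm.smul_def]

variable [Fintype G]

lemma coeff_mul_eq_sum {R : Type*} [Semiring R] (f f' : MonoidAlgebra R G) (x : G) :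
    (f * f').coeff x = ∑ y, f.coeff (x * y⁻¹) * f'.coeff y := by
  rw [MonoidAlgebra.coeff_mul_apply_right, Finsupp.sum_fintype]
  simp

lemma mul_mem_invariantCoeffs_stabilizer (hA : ∀ g : G, Equiv.mulRight g ∈ A)
    {f f' : MonoidAlgebra ℤ G} (hf : f ∈ invariantCoeffs (stabilizer A (1 : G)) G)
    (hf' : f' ∈ invariantCoeffs (stabilizer A (1 : G)) G) :
    f * f' ∈ invariantCoeffs (stabilizer A (1 : G)) G := by
  intro s g
  rw [coeff_mul_eq_sum, coeff_mul_eq_sum, ← Equiv.sum_comp (toPerm s)]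
  refine Finset.sum_congr rfl fun y _ => ?_
  obtain ⟨t, ht⟩ := exists_stabilizer_smul_mul_inv hA s y
  rw [toPerm_apply, ← ht, hf t, hf' s]

variable (A) in
noncomputable def schurRing (hA : ∀ g : G, Equiv.mulRight g ∈ A) :
    Subring (MonoidAlgebra ℤ G) :=
  { (invariantCoeffs (stabilizer A (1 : G)) G).toAddSubgroup with
    one_mem' := one_mem_invariantCoeffs fun s => s.2
    mul_mem' := mul_mem_invariantCoeffs_stabilizer hA }

end SchurRing

/-- Schur's theorem on transitivity modules. -/
theorem stmt3 {G : Type*} [Group G] [Fintype G] (A : Subgroup (Equiv.Perm G))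
    (hA : ∀ g : G, Equiv.mulRight g ∈ A) :
    ∃ R : Subring (MonoidAlgebra ℤ G),
      (R : Set (MonoidAlgebra ℤ G)) =
        (Submodule.span ℤ
          (Set.range fun g : G =>
            clsum (MulAction.orbit (MulAction.stabilizer A (1 : G)) g)) :
          Set (MonoidAlgebra ℤ G)) :=
  ⟨schurRing A hA, by rw [span_clsum_orbit]; rfl⟩
end

section
/- Let A be a Schur ring over a finite group G, H ≤ G an A-subgroup, and X a basic set of A. Then there exists a positive integer ℓ such that for every x ∈ G, |Hx ∩ X| equals 0 or ℓ. -/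
open scoped Pointwise

structure SchurRing (G : Type*) [Group G] [Fintype G] where
  P : Set (Set G)
  one_mem : ({(1 : G)} : Set G) ∈ P
  nonempty_cls : ∀ X ∈ P, X.Nonempty
  cover : ∀ g : G, ∃ X ∈ P, g ∈ X
  disj : ∀ X ∈ P, ∀ Y ∈ P, X ≠ Y → Disjoint X Y
  inv_mem : ∀ X ∈ P, X⁻¹ ∈ P
  mul_closed : ∀ X ∈ P, ∀ Y ∈ P,
    clsum X * clsum Y ∈ Submodule.span ℤ (clsum '' P)

def SchurRing.isASet {G : Type*} [Group G] [Fintype G] (A : SchurRing G) (X : Set G) : Prop :=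
  clsum X ∈ Submodule.span ℤ (clsum '' A.P)

/-! Since `H` is an `A`-subgroup, `clsum H * clsum X` lies in the span of the basic class sums,
so its coefficients are constant on every basic set; its coefficient at `x` is `|Hx ∩ X|`.
If `Hx ∩ X` contains some `y`, then `Hx = Hy` with `y ∈ X`, so `|Hx ∩ X|` equals `|Hx₀ ∩ X|`
for any fixed `x₀ ∈ X`, which is positive. -/

lemma coeff_clsum_s6 {G : Type*} [Group G] [Fintype G] (s : Set G) (g : G) [Decidable (g ∈ s)] :
    (clsum s).coeff g = if g ∈ s then 1 else 0 := by
  classical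
  simp only [clsum, MonoidAlgebra.coeff_sum, Finsupp.finsetSum_apply, MonoidAlgebra.of_apply,
    MonoidAlgebra.coeff_single, Finsupp.single_apply, Finset.sum_ite_eq', Set.Finite.mem_toFinset]

lemma coeff_mul_clsum {G : Type*} [Group G] [Fintype G] (v : MonoidAlgebra ℤ G) (s : Set G)
    (g : G) : (v * clsum s).coeff g = ∑ y ∈ s.toFinite.toFinset, v.coeff (g * y⁻¹) := by
  simp only [clsum, Finset.mul_sum, MonoidAlgebra.coeff_sum, Finsupp.finsetSum_apply,
    MonoidAlgebra.of_apply, MonoidAlgebra.coeff_mul_single_apply, mul_one]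

lemma mem_image_mul_right_iff {G : Type*} [Group G] (s : Set G) (x y : G) :
    y ∈ (fun h => h * x) '' s ↔ y * x⁻¹ ∈ s := by
  rw [Set.image_mul_right]; rfl

lemma image_mul_right_eq_of_mem {G : Type*} [Group G] (H : Subgroup G) {x y : G}
    (hy : y ∈ (fun h => h * x) '' (H : Set G)) :
    (fun h => h * y) '' (H : Set G) = (fun h => h * x) '' (H : Set G) := by
  rw [mem_image_mul_right_iff, SetLike.mem_coe] at hy
  ext z
  simp only [mem_image_mul_right_iff, SetLike.mem_coe]
  rw [← H.mul_mem_cancel_right hy, mul_assoc, inv_mul_cancel_left]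

lemma coeff_clsum_subgroup_mul_clsum {G : Type*} [Group G] [Fintype G] (H : Subgroup G)
    (X : Set G) (x : G) :
    (clsum (H : Set G) * clsum X).coeff x = ((((fun h => h * x) '' (H : Set G)) ∩ X).ncard : ℤ) := by
  classical
  have hset : ((fun h => h * x) '' (H : Set G)) ∩ X =
      ↑(X.toFinite.toFinset.filter fun y => x * y⁻¹ ∈ H) := by
    ext y
    simp [and_comm, ← H.inv_mem_iff (x := y * x⁻¹)]
  rw [coeff_mul_clsum, hset, Set.ncard_coe_finset, Finset.card_filter]
  push_cast
  simp only [coeff_clsum_s6, SetLike.mem_coe]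

namespace SchurRing

variable {G : Type*} [Group G] [Fintype G] (A : SchurRing G)

lemma mul_clsum_mem_span {v : MonoidAlgebra ℤ G} (hv : v ∈ Submodule.span ℤ (clsum '' A.P))
    {X : Set G} (hX : X ∈ A.P) : v * clsum X ∈ Submodule.span ℤ (clsum '' A.P) := by
  have : Submodule.span ℤ (clsum '' A.P) ≤
      (Submodule.span ℤ (clsum '' A.P)).comap (LinearMap.mulRight ℤ (clsum X)) := by
    rw [Submodule.span_le]
    rintro _ ⟨Y, hY, rfl⟩
    exact A.mul_closed Y hY X hX
  exact this hv

lemma coeff_eq_of_mem_span {v : MonoidAlgebra ℤ G} (hv : v ∈ Submodule.span ℤ (clsum '' A.P))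
    {X : Set G} (hX : X ∈ A.P) {g g' : G} (hg : g ∈ X) (hg' : g' ∈ X) :
    v.coeff g = v.coeff g' := by
  classical
  induction hv using Submodule.span_induction with
  | mem w hw =>
    obtain ⟨Y, hY, rfl⟩ := hw
    rw [coeff_clsum_s6, coeff_clsum_s6]
    obtain rfl | hXY := eq_or_ne X Y
    · simp [hg, hg']
    · have hd := A.disj X hX Y hY hXY
      simp [hd.notMem_of_mem_left hg, hd.notMem_of_mem_left hg']
  | zero => rfl
  | add u w _ _ hu hw => simp only [MonoidAlgebra.coeff_add, Finsupp.add_apply, hu, hw]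
  | smul c u _ hu => simp only [MonoidAlgebra.coeff_smul_apply, hu]

end SchurRing

/-- basic sets meet cosets of an A-subgroup in 0 or ℓ points. -/
theorem stmt6 {G : Type*} [Group G] [Fintype G] (A : SchurRing G) (H : Subgroup G)
    (hH : A.isASet (H : Set G)) (X : Set G) (hX : X ∈ A.P) :
    ∃ ℓ : ℕ, 0 < ℓ ∧ ∀ x : G,
      (((fun h => h * x) '' (H : Set G)) ∩ X).ncard = 0 ∨
      (((fun h => h * x) '' (H : Set G)) ∩ X).ncard = ℓ := by
  set count : G → ℕ := fun x => (((fun h => h * x) '' (H : Set G)) ∩ X).ncard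
  have hcount : ∀ g ∈ X, ∀ g' ∈ X, count g = count g' := fun g hg g' hg' => by
    have := A.coeff_eq_of_mem_span (A.mul_clsum_mem_span hH hX) hX hg hg'
    rwa [coeff_clsum_subgroup_mul_clsum, coeff_clsum_subgroup_mul_clsum, Nat.cast_inj] at this
  obtain ⟨x₀, hx₀⟩ := A.nonempty_cls X hX
  have hx₀_mem : x₀ ∈ ((fun h => h * x₀) '' (H : Set G)) ∩ X := ⟨⟨1, H.one_mem, one_mul x₀⟩, hx₀⟩
  refine ⟨count x₀, (Set.ncard_pos (Set.toFinite _)).mpr ⟨x₀, hx₀_mem⟩, fun x => ?_⟩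
  obtain hempty | ⟨y, hyHx, hyX⟩ :=
    Set.eq_empty_or_nonempty (((fun h => h * x) '' (H : Set G)) ∩ X)
  · exact Or.inl (by rw [hempty, Set.ncard_empty])
  · right
    change count x = count x₀
    rw [← hcount y hyX x₀ hx₀]
    simp only [count, image_mul_right_eq_of_mem H hyHx]
end

section
/- Let A be a Schur ring over an abelian group G, p a prime divisor of |G|, and X an A-set. Then the set X^[p] = {x^p : x ∈ X and |X ∩ xG[p]| ≢ 0 (mod p)} is an A-set, where G[p] = {g ∈ G : g^p = 1}. -/
open scoped Pointwise

open scoped Classical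

section basiclemmas
variable {G : Type*} [Group G] [Fintype G]

lemma clsum_apply (s : Set G) (g : G) :
    (clsum s).coeff g = if g ∈ s then 1 else 0 := by
  unfold clsum
  rw [MonoidAlgebra.coeff_sum, Finsupp.finset_sum_apply]
  simp only [MonoidAlgebra.of_apply, MonoidAlgebra.coeff_single, Finsupp.single_apply]
  rw [Finset.sum_ite_eq' s.toFinite.toFinset g (fun _ => (1:ℤ))]
  simp [Set.Finite.mem_toFinset]

lemma span_const (A : SchurRing G) {β : MonoidAlgebra ℤ G}
    (hβ : β ∈ Submodule.span ℤ (clsum '' A.P)) {C : Set G} (hC : C ∈ A.P)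
    {x y : G} (hx : x ∈ C) (hy : y ∈ C) : β.coeff x = β.coeff y := by
  induction hβ using Submodule.span_induction with
  | mem b hb =>
      obtain ⟨D, hD, rfl⟩ := hb
      rw [clsum_apply, clsum_apply]
      have key : ∀ a b : G, a ∈ C → b ∈ C → a ∈ D → b ∈ D := by
        intro a b ha hb haD
        have hCD : C = D := by
          by_contra hne
          exact Set.disjoint_left.mp (A.disj C hC D hD hne) ha haD
        exact hCD ▸ hb
      by_cases hxD : x ∈ D
      · rw [if_pos hxD, if_pos (key x y hx hy hxD)]
      · rw [if_neg hxD, if_neg (fun hyD => hxD (key y x hy hx hyD))]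
  | zero => simp
  | add b c _ _ ihb ihc => show b.coeff x + c.coeff x = b.coeff y + c.coeff y; rw [ihb, ihc]
  | smul a b _ ih => show a * b.coeff x = a * b.coeff y; rw [ih]

lemma mem_span_of_const (A : SchurRing G) (β : MonoidAlgebra ℤ G)
    (h : ∀ C ∈ A.P, ∀ x ∈ C, ∀ y ∈ C, β.coeff x = β.coeff y) :
    β ∈ Submodule.span ℤ (clsum '' A.P) := by
  have hfin : A.P.Finite := Set.toFinite _
  have hβeq : β = ∑ C ∈ hfin.toFinset,
      β.coeff (if h : C.Nonempty then h.choose else 1) • clsum C := by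
    ext g
    rw [MonoidAlgebra.coeff_sum, Finsupp.finset_sum_apply]
    obtain ⟨C0, hC0, hgC0⟩ := A.cover g
    rw [Finset.sum_eq_single C0]
    · have hne : C0.Nonempty := A.nonempty_cls C0 hC0
      have hrepC0 : (if h : C0.Nonempty then h.choose else 1) ∈ C0 := by
        rw [dif_pos hne]; exact hne.choose_spec
      rw [MonoidAlgebra.coeff_smul_apply, clsum_apply, if_pos hgC0, smul_eq_mul, mul_one]
      exact (h C0 hC0 _ hrepC0 g hgC0).symm
    · intro D hD hDne
      have hDP : D ∈ A.P := hfin.mem_toFinset.mp hD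
      have hg : g ∉ D := fun hgD =>
        Set.disjoint_left.mp (A.disj D hDP C0 hC0 hDne) hgD hgC0
      rw [MonoidAlgebra.coeff_smul_apply, clsum_apply, if_neg hg, smul_zero]
    · intro hC0n; exact absurd (hfin.mem_toFinset.mpr hC0) hC0n
  rw [hβeq]
  exact Submodule.sum_mem _ fun C hC => Submodule.smul_mem _ _
    (Submodule.subset_span ⟨C, hfin.mem_toFinset.mp hC, rfl⟩)

lemma span_mul_mem (A : SchurRing G) {β γ : MonoidAlgebra ℤ G}
    (hβ : β ∈ Submodule.span ℤ (clsum '' A.P))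
    (hγ : γ ∈ Submodule.span ℤ (clsum '' A.P)) :
    β * γ ∈ Submodule.span ℤ (clsum '' A.P) := by
  induction hβ, hγ using Submodule.span_induction₂ with
  | mem_mem b c hb hc =>
      obtain ⟨Cb, hCb, rfl⟩ := hb
      obtain ⟨Cc, hCc, rfl⟩ := hc
      exact A.mul_closed Cb hCb Cc hCc
  | zero_left y hy => simp
  | zero_right x hx => simp
  | add_left x y z _ _ _ h1 h2 => rw [add_mul]; exact Submodule.add_mem _ h1 h2
  | add_right x y z _ _ _ h1 h2 => rw [mul_add]; exact Submodule.add_mem _ h1 h2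
  | smul_left r x y _ _ h => rw [smul_mul_assoc]; exact Submodule.smul_mem _ _ h
  | smul_right r x y _ _ h => rw [mul_smul_comm]; exact Submodule.smul_mem _ _ h

lemma span_pow_mem (A : SchurRing G) {β : MonoidAlgebra ℤ G}
    (hβ : β ∈ Submodule.span ℤ (clsum '' A.P)) (n : ℕ) (hn : n ≠ 0) :
    β ^ n ∈ Submodule.span ℤ (clsum '' A.P) := by
  induction n with
  | zero => exact absurd rfl hn
  | succ n ih =>
      rcases Nat.eq_zero_or_pos n with h | h
      · subst h; simpa using hβ
      · rw [pow_succ]; exact span_mul_mem A (ih h.ne') hβ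

end basiclemmas

section charppart
variable {G : Type*} [CommGroup G] [Fintype G] (p : ℕ) [Fact p.Prime]

noncomputable def redp : MonoidAlgebra ℤ G →+* MonoidAlgebra (ZMod p) G :=
  MonoidAlgebra.liftNCRingHom
    (MonoidAlgebra.singleOneRingHom.comp (Int.castRingHom (ZMod p)))
    (MonoidAlgebra.of (ZMod p) G) (fun _ _ => Commute.all _ _)

set_option linter.unusedSectionVars false in
lemma redp_single (x : G) (r : ℤ) :
    redp p (MonoidAlgebra.single x r) = MonoidAlgebra.single x (r : ZMod p) := by
  unfold redp
  show MonoidAlgebra.liftNC _ _ _ = _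
  rw [MonoidAlgebra.liftNC_single]
  show MonoidAlgebra.single (1:G) ((r : ZMod p)) * MonoidAlgebra.single x 1 = _
  rw [MonoidAlgebra.single_mul_single, one_mul, mul_one]

set_option linter.unusedSectionVars false in
lemma redp_apply (β : MonoidAlgebra ℤ G) (g : G) :
    (redp p β).coeff g = ((β.coeff g : ℤ) : ZMod p) := by
  induction β using MonoidAlgebra.induction_linear with
  | zero => simp
  | add f h hf hh =>
      rw [map_add]
      show (redp p f).coeff g + (redp p h).coeff g = ((f.coeff g + h.coeff g : ℤ) : ZMod p)
      rw [hf, hh]; push_cast; ring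
  | single x r =>
      rw [redp_single]
      show Finsupp.single x ((r : ZMod p)) g = ((Finsupp.single x r g : ℤ) : ZMod p)
      by_cases hx : x = g <;> simp [Finsupp.single_apply, hx]

instance : CharP (MonoidAlgebra (ZMod p) G) p :=
  charP_of_injective_algebraMap (R := ZMod p) (fun a b h => by
    have := congrArg (fun f => f.coeff (1 : G)) h
    simpa [MonoidAlgebra.coe_algebraMap, MonoidAlgebra.coeff_single, Finsupp.single_apply] using this) p

lemma clsum_pow_coeff (X : Set G) (y : G) :
    (((clsum X ^ p).coeff y : ℤ) : ZMod p)
      = ((X.toFinite.toFinset.filter (fun x => x ^ p = y)).card : ZMod p) := by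
  rw [← redp_apply, map_pow]
  have h1 : redp p (clsum X)
      = ∑ x ∈ X.toFinite.toFinset, MonoidAlgebra.of (ZMod p) G x := by
    unfold clsum
    rw [map_sum]
    refine Finset.sum_congr rfl fun x _ => ?_
    show redp p (MonoidAlgebra.single x (1:ℤ)) = _
    rw [redp_single]; norm_num
  rw [h1, sum_pow_char]
  have h2 : ∀ x : G, (MonoidAlgebra.of (ZMod p) G x) ^ p
      = MonoidAlgebra.single (x ^ p) (1 : ZMod p) := fun x => by
    rw [MonoidAlgebra.of_apply, MonoidAlgebra.single_pow, one_pow]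
  simp_rw [h2]
  rw [MonoidAlgebra.coeff_sum, Finsupp.finset_sum_apply]
  simp only [MonoidAlgebra.coeff_single, Finsupp.single_apply]
  rw [Finset.sum_boole]

end charppart

/-- Schur's second multiplier theorem. -/
theorem stmt8 {G : Type*} [CommGroup G] [Fintype G] (A : SchurRing G) (p : ℕ)
    (hp : p.Prime) (hdvd : p ∣ Fintype.card G) (X : Set G) (hX : A.isASet X) :
    A.isASet {y : G | ∃ x ∈ X, y = x ^ p ∧
      ¬ (p ∣ (X ∩ ((fun g => x * g) '' {g : G | g ^ p = 1})).ncard)} := by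
  haveI : Fact p.Prime := ⟨hp⟩
  set β := clsum X ^ p with hβdef
  have hβS : β ∈ Submodule.span ℤ (clsum '' A.P) := span_pow_mem A hX p hp.ne_zero
  set N : G → ℕ := fun y => (X.toFinite.toFinset.filter (fun x => x ^ p = y)).card with hN
  have hcoeff : ∀ y : G, (¬ (p:ℤ) ∣ β.coeff y) ↔ ¬ p ∣ N y := by
    intro y
    rw [not_iff_not, ← ZMod.intCast_zmod_eq_zero_iff_dvd, hβdef, clsum_pow_coeff,
      ZMod.natCast_eq_zero_iff]
  have hncard : ∀ x : G,
      (X ∩ ((fun g => x * g) '' {g : G | g ^ p = 1})).ncard = N (x ^ p) := by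
    intro x
    have hseteq : X ∩ ((fun g => x * g) '' {g : G | g ^ p = 1})
        = ↑(X.toFinite.toFinset.filter (fun z => z ^ p = x ^ p)) := by
      ext z
      simp only [Set.mem_inter_iff, Set.mem_image, Set.mem_setOf_eq, Finset.coe_filter,
        Set.Finite.mem_toFinset]
      constructor
      · rintro ⟨hzX, g, hg, rfl⟩
        exact ⟨hzX, by rw [mul_pow, hg, mul_one]⟩
      · rintro ⟨hzX, hzp⟩
        refine ⟨hzX, x⁻¹ * z, ?_, by group⟩
        show (x⁻¹ * z) ^ p = 1
        rw [mul_pow, hzp, inv_pow, inv_mul_cancel]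
    rw [hseteq, Set.ncard_coe_finset]
  have hsets : {y : G | ∃ x ∈ X, y = x ^ p ∧
      ¬ (p ∣ (X ∩ ((fun g => x * g) '' {g : G | g ^ p = 1})).ncard)}
      = {y : G | ¬ (p:ℤ) ∣ β.coeff y} := by
    ext y
    simp only [Set.mem_setOf_eq, hcoeff]
    constructor
    · rintro ⟨x, hxX, rfl, hnd⟩
      rwa [hncard] at hnd
    · intro hnd
      have hN0 : N y ≠ 0 := fun h0 => hnd (h0 ▸ dvd_zero p)
      obtain ⟨x, hx⟩ := Finset.card_pos.mp (Nat.pos_of_ne_zero hN0)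
      rw [Finset.mem_filter, Set.Finite.mem_toFinset] at hx
      refine ⟨x, hx.1, hx.2.symm, ?_⟩
      rw [hncard, hx.2]
      exact hnd
  show clsum _ ∈ _
  rw [hsets]
  apply mem_span_of_const
  intro C hC x hx y hy
  rw [clsum_apply, clsum_apply]
  have hxy : (¬ (p:ℤ) ∣ β.coeff x) ↔ (¬ (p:ℤ) ∣ β.coeff y) := by
    rw [span_const A hβS hC hx hy]
  have hxy' : x ∈ {y : G | ¬ (p:ℤ) ∣ β.coeff y} ↔ y ∈ {y : G | ¬ (p:ℤ) ∣ β.coeff y} := hxy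
  by_cases hxm : x ∈ {y : G | ¬ (p:ℤ) ∣ β.coeff y}
  · rw [if_pos hxm, if_pos (hxy'.mp hxm)]
  · rw [if_neg hxm, if_neg (fun hym => hxm (hxy'.mpr hym))]
end

section
/- Let A be a Schur ring over a group G with A-subgroups V, W such that A is the star product A = A_V ★ A_W (conditions: V∩W ⊴ W; every basic set inside W∖V is a union of (V∩W)-cosets; every basic set outside V∪W equals YZ for basic sets Y ⊆ V, Z ⊆ W). If moreover V ∩ W ⊴ G, then A is the V/(V∩W)-wreath product, i.e., every basic set X of A with X ⊆ G∖V satisfies (V∩W) ≤ rad(X). -/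
open scoped Pointwise

/-
Let N = V ∩ W. Because N is normal in G, a set X with NX = X also satisfies XN = X (as xc = (xcx⁻¹)x),
so it suffices to show NX = X for every basic set X outside V. A basic set meets an A-set only if it lies
inside it, so such an X lies either in W \ V, where NX = X is part of the star product condition, or outside
V ∪ W. In the latter case X = YZ with Y ⊆ V, Z ⊆ W basic; Z cannot lie in V (else X ⊆ V), so Z ⊆ W \ V
and NZ = Z, and then cyz = y(y⁻¹cy)z shows NYZ = YZ, again by normality of N.
-/

section Pointwise

variable {G : Type*} [Group G]

lemma Set.image_mul_left_eq_self_of_forall_mem {H : Subgroup G} {X : Set G}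
    (hX : ∀ c ∈ H, ∀ x ∈ X, c * x ∈ X) {g : G} (hg : g ∈ H) :
    (fun x => g * x) '' X = X :=
  Set.Subset.antisymm (Set.image_subset_iff.2 fun x hx => hX g hg x hx)
    fun x hx => ⟨g⁻¹ * x, hX _ (inv_mem hg) x hx, mul_inv_cancel_left g x⟩

lemma Set.image_mul_right_eq_self_of_forall_mem {H : Subgroup G} {X : Set G}
    (hX : ∀ c ∈ H, ∀ x ∈ X, x * c ∈ X) {g : G} (hg : g ∈ H) :
    (fun x => x * g) '' X = X :=
  Set.Subset.antisymm (Set.image_subset_iff.2 fun x hx => hX g hg x hx)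
    fun x hx => ⟨x * g⁻¹, hX _ (inv_mem hg) x hx, inv_mul_cancel_right x g⟩

variable {N : Subgroup G} [N.Normal]

lemma Subgroup.Normal.mul_mem_of_forall_mul_mem_left {X : Set G}
    (hX : ∀ c ∈ N, ∀ x ∈ X, c * x ∈ X) : ∀ c ∈ N, ∀ x ∈ X, x * c ∈ X := by
  intro c hc x hx
  simpa using hX (x * c * x⁻¹) (Subgroup.Normal.conj_mem ‹_› c hc x) x hx

lemma Set.mul_mem_mul_of_forall_mul_mem_left {Y Z : Set G}
    (hZ : ∀ c ∈ N, ∀ z ∈ Z, c * z ∈ Z) : ∀ c ∈ N, ∀ x ∈ Y * Z, c * x ∈ Y * Z := by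
  rintro c hc _ ⟨y, hy, z, hz, rfl⟩
  have hconj : y⁻¹ * c * y ∈ N := by simpa using Subgroup.Normal.conj_mem ‹_› c hc y⁻¹
  exact ⟨y, hy, _, hZ _ hconj z hz, by group⟩

end Pointwise

namespace SchurRing

variable {G : Type*} [Group G] [Fintype G]

lemma coeff_clsum (s : Set G) (g : G) [Decidable (g ∈ s)] :
    (clsum s).coeff g = if g ∈ s then 1 else 0 := by
  classical
  unfold clsum
  rw [MonoidAlgebra.coeff_sum, Finset.sum_apply']
  simp only [MonoidAlgebra.of_apply, MonoidAlgebra.coeff_single, Finsupp.single_apply]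
  rw [Finset.sum_ite_eq' s.toFinite.toFinset g (fun _ => (1 : ℤ))]
  simp

variable {A : SchurRing G}

lemma coeff_eq_of_mem_span_s9 {f : MonoidAlgebra ℤ G} (hf : f ∈ Submodule.span ℤ (clsum '' A.P))
    {X : Set G} (hX : X ∈ A.P) {x y : G} (hx : x ∈ X) (hy : y ∈ X) :
    f.coeff x = f.coeff y := by
  classical
  induction hf using Submodule.span_induction with
  | mem v hv =>
    obtain ⟨X', hX', rfl⟩ := hv
    rw [coeff_clsum, coeff_clsum]
    by_cases hXX : X' = X
    · subst hXX
      simp [hx, hy]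
    · have hd := A.disj X' hX' X hX hXX
      simp [Set.disjoint_right.mp hd hx, Set.disjoint_right.mp hd hy]
  | zero => rfl
  | add u v _ _ hu hv =>
    rw [MonoidAlgebra.coeff_add, Finsupp.add_apply, Finsupp.add_apply, hu, hv]
  | smul a u _ hu =>
    rw [MonoidAlgebra.coeff_smul_apply, MonoidAlgebra.coeff_smul_apply, hu]

lemma isASet.subset_of_mem {S X : Set G} (hS : A.isASet S) (hX : X ∈ A.P) {x : G}
    (hx : x ∈ X) (hxS : x ∈ S) : X ⊆ S := by
  classical
  intro y hy
  have hcoeff := coeff_eq_of_mem_span_s9 hS hX hx hy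
  rw [coeff_clsum, coeff_clsum] at hcoeff
  by_contra hyS
  simp [hxS, hyS] at hcoeff

end SchurRing

theorem stmt9_general {G : Type*} [Group G] [Fintype G] (A : SchurRing G) (V W : Subgroup G)
    (hV : A.isASet (V : Set G)) (hW : A.isASet (W : Set G))
    (hstar2 : ∀ X ∈ A.P, X ⊆ (W : Set G) \ (V : Set G) →
      ∀ x ∈ X, ∀ c ∈ (V ⊓ W : Subgroup G), c * x ∈ X)
    (hstar3 : ∀ X ∈ A.P, X ⊆ ((V : Set G) ∪ (W : Set G))ᶜ →
      ∃ Y ∈ A.P, ∃ Z ∈ A.P, Y ⊆ (V : Set G) ∧ Z ⊆ (W : Set G) ∧ X = Y * Z)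
    (hnormG : (V ⊓ W : Subgroup G).Normal) :
    ∀ X ∈ A.P, X ⊆ (V : Set G)ᶜ →
      ∀ g ∈ (V ⊓ W : Subgroup G),
        (fun x => x * g) '' X = X ∧ (fun x => g * x) '' X = X := by
  have stable_of_subset {X : Set G} (hX : X ∈ A.P) (hXW : X ⊆ W) (hXV : X ⊆ (V : Set G)ᶜ) :
      ∀ c ∈ V ⊓ W, ∀ x ∈ X, c * x ∈ X :=
    fun c hc x hx => hstar2 X hX (fun y hy => ⟨hXW hy, hXV hy⟩) x hx c hc
  have stable (X : Set G) (hX : X ∈ A.P) (hXV : X ⊆ (V : Set G)ᶜ) :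
      ∀ c ∈ V ⊓ W, ∀ x ∈ X, c * x ∈ X := by
    by_cases hXW : ∃ x ∈ X, x ∈ W
    · obtain ⟨x, hx, hxW⟩ := hXW
      exact stable_of_subset hX (hW.subset_of_mem hX hx hxW) hXV
    push Not at hXW
    obtain ⟨Y, hY, Z, hZ, hYV, hZW, rfl⟩ :=
      hstar3 X hX fun x hx hxVW => hxVW.elim (hXV hx) (hXW x hx)
    refine Set.mul_mem_mul_of_forall_mul_mem_left (stable_of_subset hZ hZW fun z hz hzV => ?_)
    obtain ⟨_, y, hy, z', hz', rfl⟩ := A.nonempty_cls _ hX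
    exact hXV ⟨y, hy, z', hz', rfl⟩ (mul_mem (hYV hy) (hV.subset_of_mem hZ hz hzV hz'))
  intro X hX hXV g hg
  exact ⟨Set.image_mul_right_eq_self_of_forall_mem
      (Subgroup.Normal.mul_mem_of_forall_mul_mem_left (stable X hX hXV)) hg,
    Set.image_mul_left_eq_self_of_forall_mem (stable X hX hXV) hg⟩

/-- a star product with V ∩ W normal in G is the V/(V∩W)-wreath product. -/
theorem stmt9 {G : Type*} [Group G] [Fintype G] (A : SchurRing G) (V W : Subgroup G)
    (hV : A.isASet (V : Set G)) (hW : A.isASet (W : Set G))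
    (hnormW : ∀ w ∈ W, ∀ x ∈ (V ⊓ W : Subgroup G), w * x * w⁻¹ ∈ (V ⊓ W : Subgroup G))
    (hstar2 : ∀ X ∈ A.P, X ⊆ (W : Set G) \ (V : Set G) →
      ∀ x ∈ X, ∀ c ∈ (V ⊓ W : Subgroup G), c * x ∈ X)
    (hstar3 : ∀ X ∈ A.P, X ⊆ ((V : Set G) ∪ (W : Set G))ᶜ →
      ∃ Y ∈ A.P, ∃ Z ∈ A.P, Y ⊆ (V : Set G) ∧ Z ⊆ (W : Set G) ∧ X = Y * Z)
    (hnormG : (V ⊓ W : Subgroup G).Normal) :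
    ∀ X ∈ A.P, X ⊆ (V : Set G)ᶜ →
      ∀ g ∈ (V ⊓ W : Subgroup G),
        (fun x => x * g) '' X = X ∧ (fun x => g * x) '' X = X :=
  stmt9_general A V W hV hW hstar2 hstar3 hnormG
end

section
/- Let H = E × F be an abelian group with E = ⟨u,v⟩ ≅ ℤ/2 × ℤ/2 and |F| odd. Let A = V(H, A₁) be a Schurian Schur ring over H (A ≤ Sym(H) containing right multiplications) such that F and ⟨F,v⟩ are A-subgroups and {u, uv} is a basic set of A. If X is a basic set of A with X ⊄ ⟨F,v⟩, then |X ∩ Fu| = |X ∩ Fuv|. -/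
/-- The Klein four group E = ⟨u,v⟩ ≅ ℤ/2 × ℤ/2. -/
abbrev E4 : Type := Multiplicative (ZMod 2) × Multiplicative (ZMod 2)

def uElt (F : Type*) [CommGroup F] : E4 × F :=
  ((Multiplicative.ofAdd (1 : ZMod 2), 1), 1)

def vElt (F : Type*) [CommGroup F] : E4 × F :=
  ((1, Multiplicative.ofAdd (1 : ZMod 2)), 1)

/-- The subgroup F, as a subset of E × F. -/
def Fset (F : Type*) [CommGroup F] : Set (E4 × F) := {h | h.1 = 1}

/-- The subgroup ⟨F, v⟩, as a subset of E × F. -/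
def Fv (F : Type*) [CommGroup F] : Set (E4 × F) := {h | h.1.1 = 1}

/-- The coset Fu. -/
def Fu (F : Type*) [CommGroup F] : Set (E4 × F) :=
  {h | h.1 = (Multiplicative.ofAdd (1 : ZMod 2), 1)}

/-- The coset Fuv. -/
def Fuv (F : Type*) [CommGroup F] : Set (E4 × F) :=
  {h | h.1 = (Multiplicative.ofAdd (1 : ZMod 2), Multiplicative.ofAdd (1 : ZMod 2))}

theorem stmt18 {F : Type*} [CommGroup F] [Fintype F] (hodd : Odd (Fintype.card F))
    (B : Subgroup (Equiv.Perm (E4 × F))) (hB : ∀ g : E4 × F, Equiv.mulRight g ∈ B)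
    (hFset : ∀ x ∈ Fset F,
      MulAction.orbit (MulAction.stabilizer B (1 : E4 × F)) x ⊆ Fset F)
    (hFv : ∀ x ∈ Fv F,
      MulAction.orbit (MulAction.stabilizer B (1 : E4 × F)) x ⊆ Fv F)
    (hbasic : (MulAction.orbit (MulAction.stabilizer B (1 : E4 × F)) (uElt F) : Set (E4 × F)) =
      {uElt F, uElt F * vElt F})
    (X : Set (E4 × F))
    (hX : ∃ g : E4 × F, X = MulAction.orbit (MulAction.stabilizer B (1 : E4 × F)) g)
    (hnsub : ¬ X ⊆ Fv F) :
    (X ∩ Fu F).ncard = (X ∩ Fuv F).ncard := by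
  classical
  set S := MulAction.stabilizer B (1 : E4 × F) with hS
  -- obtain σ with σ u = uv
  have hmem : (uElt F * vElt F) ∈ MulAction.orbit S (uElt F) := by
    rw [hS, hbasic]; exact Set.mem_insert_iff.mpr (Or.inr rfl)
  obtain ⟨σ, hσ⟩ := hmem
  set π : Equiv.Perm (E4 × F) := ((σ : B) : Equiv.Perm (E4 × F)) with hπ
  have hσu : π (uElt F) = uElt F * vElt F := hσ
  -- π maps Fset to Fset, Fv to Fv, and preserves the complement of Fset
  have hπF : ∀ y ∈ Fset F, π y ∈ Fset F := fun y hy =>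
    hFset y hy (MulAction.mem_orbit y σ)
  have hπFv : ∀ y ∈ Fv F, π y ∈ Fv F := fun y hy =>
    hFv y hy (MulAction.mem_orbit y σ)
  have hπFc : ∀ y, y ∉ Fset F → π y ∉ Fset F := by
    intro y hy hc
    apply hy
    have h2 : (σ⁻¹ • (π y) : E4 × F) ∈ Fset F :=
      hFset _ hc (MulAction.mem_orbit (π y) σ⁻¹)
    have h3 : (σ⁻¹ • (π y) : E4 × F) = y := by
      show π⁻¹ (π y) = y
      simp
    rwa [h3] at h2
  -- the auxiliary permutation p : x ↦ π (x * u) * (uv)⁻¹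
  set p : Equiv.Perm (E4 × F) :=
    Equiv.mulRight ((uElt F * vElt F)⁻¹) * π * Equiv.mulRight (uElt F) with hp
  have hpx : ∀ x, p x = π (x * uElt F) * (uElt F * vElt F)⁻¹ := fun x => rfl
  have hpB : p ∈ B := by
    exact mul_mem (mul_mem (hB _) (σ : B).2) (hB _)
  have hp1 : (⟨p, hpB⟩ : B) ∈ S := by
    rw [hS, MulAction.mem_stabilizer_iff]
    show p 1 = 1
    rw [hpx, one_mul, hσu, mul_inv_cancel]
  set τ : S := ⟨⟨p, hpB⟩, hp1⟩ with hτ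
  have hτx : ∀ x : E4 × F, τ • x = p x := fun x => rfl
  obtain ⟨g, rfl⟩ := hX
  -- p maps the orbit of g into itself
  have horb : ∀ x ∈ MulAction.orbit S g, p x ∈ MulAction.orbit S g := by
    rintro x ⟨ρ, rfl⟩
    refine ⟨τ * ρ, ?_⟩
    show (τ * ρ) • g = p (ρ • g)
    rw [mul_smul, hτx]
  -- component computations
  have hω2 : Multiplicative.ofAdd (1 : ZMod 2) * Multiplicative.ofAdd (1 : ZMod 2) = 1 := by
    decide
  have hωcases : ∀ a : Multiplicative (ZMod 2), a = 1 ∨ a = Multiplicative.ofAdd (1 : ZMod 2) := by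
    decide
  have huv1 : (uElt F * vElt F).1 =
      (Multiplicative.ofAdd (1 : ZMod 2), Multiplicative.ofAdd (1 : ZMod 2)) := by
    simp [uElt, vElt]
  have hu1 : (uElt F).1 = (Multiplicative.ofAdd (1 : ZMod 2), 1) := rfl
  -- p maps X ∩ Fu into X ∩ Fuv
  have hmap1 : ∀ x ∈ MulAction.orbit S g ∩ Fu F, p x ∈ MulAction.orbit S g ∩ Fuv F := by
    rintro x ⟨hx1, hx2⟩
    refine ⟨horb x hx1, ?_⟩
    have hxu : (x * uElt F) ∈ Fset F := by
      simp only [Fset, Set.mem_setOf_eq, Prod.fst_mul, hu1]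
      rw [show x.1 = (Multiplicative.ofAdd (1 : ZMod 2), 1) from hx2]
      rw [Prod.mk_mul_mk, hω2, one_mul]
      rfl
    have h1 : (π (x * uElt F)).1 = 1 := hπF _ hxu
    show (p x).1 = _
    rw [hpx, Prod.fst_mul, h1, one_mul, Prod.fst_inv, huv1]
    decide
  -- p maps X ∩ Fuv into X ∩ Fu
  have hmap2 : ∀ x ∈ MulAction.orbit S g ∩ Fuv F, p x ∈ MulAction.orbit S g ∩ Fu F := by
    rintro x ⟨hx1, hx2⟩
    refine ⟨horb x hx1, ?_⟩
    have hx1eq : x.1 = (Multiplicative.ofAdd (1 : ZMod 2), Multiplicative.ofAdd (1 : ZMod 2)) := hx2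
    have hxuFv : (x * uElt F) ∈ Fv F := by
      simp only [Fv, Set.mem_setOf_eq, Prod.fst_mul, hx1eq, hu1, Prod.mk_mul_mk, hω2]
    have hxuF : (x * uElt F) ∉ Fset F := by
      simp only [Fset, Set.mem_setOf_eq, Prod.fst_mul, hx1eq, hu1, Prod.mk_mul_mk, hω2]
      intro hc
      have := congrArg Prod.snd hc
      simp at this
    have h1 : (π (x * uElt F)).1.1 = 1 := hπFv _ hxuFv
    have h2 : (π (x * uElt F)).1 ≠ 1 := hπFc _ hxuF
    have h3 : (π (x * uElt F)).1.2 = Multiplicative.ofAdd (1 : ZMod 2) := by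
      rcases hωcases (π (x * uElt F)).1.2 with h | h
      · exfalso; apply h2; rw [Prod.ext_iff]; exact ⟨h1, h⟩
      · exact h
    show (p x).1 = _
    rw [hpx, Prod.fst_mul, Prod.fst_inv, huv1]
    rw [show (π (x * uElt F)).1 = ((1 : Multiplicative (ZMod 2)), Multiplicative.ofAdd (1 : ZMod 2)) from Prod.ext h1 h3]
    decide
  -- conclude by double counting with the injection p
  have hinj : Set.InjOn p (MulAction.orbit S g ∩ Fu F) := (p.injective).injOn
  have hinj2 : Set.InjOn p (MulAction.orbit S g ∩ Fuv F) := (p.injective).injOn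
  exact le_antisymm
    (Set.ncard_le_ncard_of_injOn p hmap1 hinj (Set.toFinite _))
    (Set.ncard_le_ncard_of_injOn p hmap2 hinj2 (Set.toFinite _))
end
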